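/- arXiv:1307.5402 — 2 statements merged into one kernel-verified Lean document; each statement's English description precedes it below -/
import Mathlib

section
/- If f : (0, b*] → ℝ is harmonically (α,m)-convex and nonincreasing, then f is (α,m)-convex. -/
/-!
The point `m x y / (m t y + (1 - t) x)` is the weighted harmonic mean of `x` and `m y`, while
`t x + m (1 - t) y` is their weighted arithmetic mean. The harmonic mean lies below the arithmetic
one, both lie in `(0, b*]`, and `f` is nonincreasing there, so `f` at the arithmetic mean is bounded
by `f` at the harmonic mean, which harmonic `(α, m)`-convexity bounds as required.
-/

open Set

lemma weighted_harmonic_mean_mem_Ioc {u v t : ℝ} (hu : 0 < u) (hv : 0 < v) (ht : t ∈ Icc 0 1) :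
    u * v / (t * v + (1 - t) * u) ∈ Ioc 0 (t * u + (1 - t) * v) := by
  have hden : 0 < t * v + (1 - t) * u := by
    simpa using convex_Ioi (0 : ℝ) hv hu ht.1 (sub_nonneg.2 ht.2) (by ring)
  refine ⟨by positivity, (div_le_iff₀ hden).2 ?_⟩
  -- `(t u + (1 - t) v) (t v + (1 - t) u) - u v = t (1 - t) (u - v) ^ 2`
  nlinarith [mul_nonneg (mul_nonneg ht.1 (sub_nonneg.2 ht.2)) (sq_nonneg (u - v))]

lemma mul_mem_Ioc_of_mem_Ioc_one {m y b : ℝ} (hm : m ∈ Ioc 0 1) (hy : y ∈ Ioc 0 b) :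
    m * y ∈ Ioc 0 b :=
  ⟨mul_pos hm.1 hy.1, (mul_le_of_le_one_left hy.1.le hm.2).trans hy.2⟩

theorem harmonically_am_convex_nonincreasing_implies_am_convex_general
    (bs α m : ℝ) (hm : m ∈ Set.Ioc (0:ℝ) 1)
    (f : ℝ → ℝ)
    (hconv : ∀ x ∈ Set.Ioc 0 bs, ∀ y ∈ Set.Ioc 0 bs, ∀ t ∈ Set.Icc (0:ℝ) 1,
      f (m * x * y / (m * t * y + (1 - t) * x)) ≤ t ^ α * f x + m * (1 - t ^ α) * f y)
    (hanti : AntitoneOn f (Set.Ioc 0 bs)) :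
    ∀ x ∈ Set.Ioc 0 bs, ∀ y ∈ Set.Ioc 0 bs, ∀ t ∈ Set.Icc (0:ℝ) 1,
      f (t * x + m * (1 - t) * y) ≤ t ^ α * f x + m * (1 - t ^ α) * f y := by
  intro x hx y hy t ht
  have hmy : m * y ∈ Ioc 0 bs := mul_mem_Ioc_of_mem_Ioc_one hm hy
  have harith : t * x + m * (1 - t) * y ∈ Ioc 0 bs := by
    simpa [mul_assoc, mul_left_comm m] using
      convex_Ioc (0 : ℝ) bs hx hmy ht.1 (sub_nonneg.2 ht.2) (by ring)
  have hharm : m * x * y / (m * t * y + (1 - t) * x) ∈ Ioc 0 (t * x + m * (1 - t) * y) := by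
    convert weighted_harmonic_mean_mem_Ioc hx.1 hmy.1 ht using 1 <;> ring_nf
  have hharm_mem : m * x * y / (m * t * y + (1 - t) * x) ∈ Ioc 0 bs :=
    ⟨hharm.1, hharm.2.trans harith.2⟩
  exact (hanti hharm_mem harith hharm.2).trans (hconv x hx y hy t ht)

theorem harmonically_am_convex_nonincreasing_implies_am_convex
    (bs α m : ℝ) (hbs : 0 < bs) (hα : α ∈ Set.Icc (0:ℝ) 1) (hm : m ∈ Set.Ioc (0:ℝ) 1)
    (f : ℝ → ℝ)
    (hconv : ∀ x ∈ Set.Ioc 0 bs, ∀ y ∈ Set.Ioc 0 bs, ∀ t ∈ Set.Icc (0:ℝ) 1,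
      f (m * x * y / (m * t * y + (1 - t) * x)) ≤ t ^ α * f x + m * (1 - t ^ α) * f y)
    (hanti : AntitoneOn f (Set.Ioc 0 bs)) :
    ∀ x ∈ Set.Ioc 0 bs, ∀ y ∈ Set.Ioc 0 bs, ∀ t ∈ Set.Icc (0:ℝ) 1,
      f (t * x + m * (1 - t) * y) ≤ t ^ α * f x + m * (1 - t ^ α) * f y :=
  harmonically_am_convex_nonincreasing_implies_am_convex_general bs α m hm f hconv hanti
end

section
/- Let f : (0,∞) → ℝ be harmonically (α,1)-convex with α ∈ [0,1], 0 < a < b, f integrable on [a,b]. Then (ab/(b-a)) ∫_a^b f(x)/x² dx ≤ min{ (f(a) + α f(b))/(α+1), (f(b) + α f(a))/(α+1) }. -/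
/-!
Along `u = ab / (tb + (1 - t)a)` the reciprocal `1/u` is affine in `t`, and `du / u² = -d(1/u)`;
so this substitution turns `(ab / (b - a)) ∫ₐᵇ f(u) / u² du` into the mean
`∫₀¹ f(ab / (tb + (1 - t)a)) dt`. Integrating the convexity inequality in `t` with
`∫₀¹ t^α dt = 1 / (α + 1)` bounds this mean by `(f a + α f b) / (α + 1)`, and the symmetry
`t ↦ 1 - t`, which swaps `a` and `b`, gives the other bound.
-/

open intervalIntegral MeasureTheory

noncomputable section

/-- `1 / (t / x + (1 - t) / y)`, written as in the definition of harmonic convexity. -/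
def harmonicInterp (x y t : ℝ) : ℝ := x * y / (t * y + (1 - t) * x)

variable {x y t : ℝ}

lemma harmonicInterp_denom_pos (hx : 0 < x) (hy : 0 < y) (ht : t ∈ Set.Icc (0 : ℝ) 1) :
    0 < t * y + (1 - t) * x := by
  obtain ⟨ht₀, ht₁⟩ := ht
  rcases ht₀.eq_or_lt with rfl | ht₀
  · simpa using hx
  · nlinarith

@[simp] lemma harmonicInterp_zero (hx : x ≠ 0) : harmonicInterp x y 0 = y := by
  simp [harmonicInterp, hx]

@[simp] lemma harmonicInterp_one (hy : y ≠ 0) : harmonicInterp x y 1 = x := by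
  simp [harmonicInterp, hy]

lemma harmonicInterp_symm (x y t : ℝ) : harmonicInterp y x (1 - t) = harmonicInterp x y t := by
  unfold harmonicInterp
  rw [mul_comm y x]
  congr 1
  ring

lemma hasDerivAt_harmonicInterp (hd : t * y + (1 - t) * x ≠ 0) :
    HasDerivAt (harmonicInterp x y) (x * y * (x - y) / (t * y + (1 - t) * x) ^ 2) t := by
  have hdenom : HasDerivAt (fun s ↦ s * y + (1 - s) * x) (y - x) t := by
    have := ((hasDerivAt_id t).mul_const (y - x)).const_add x
    rw [one_mul] at this
    refine this.congr_of_eventuallyEq (Filter.Eventually.of_forall fun s ↦ ?_)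
    simp only [id]
    ring
  exact ((hasDerivAt_const t (x * y)).div hdenom hd).congr_deriv (by ring)

lemma hasDerivAt_harmonicInterp_of_mem_Ioo (hx : 0 < x) (hy : 0 < y)
    (ht : t ∈ Set.Ioo (min 0 1) (max 0 1)) :
    HasDerivAt (harmonicInterp x y) (x * y * (x - y) / (t * y + (1 - t) * x) ^ 2) t := by
  rw [min_eq_left zero_le_one, max_eq_right zero_le_one] at ht
  exact hasDerivAt_harmonicInterp (harmonicInterp_denom_pos hx hy (Set.Ioo_subset_Icc_self ht)).ne'

lemma continuousOn_harmonicInterp (hx : 0 < x) (hy : 0 < y) :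
    ContinuousOn (harmonicInterp x y) (Set.uIcc 0 1) := by
  rw [Set.uIcc_of_le zero_le_one]
  exact continuousOn_const.div (by fun_prop) fun _ ht ↦ (harmonicInterp_denom_pos hx hy ht).ne'

lemma harmonicInterp_deriv_nonpos (hx : 0 < x) (hxy : x ≤ y) (t : ℝ) :
    x * y * (x - y) / (t * y + (1 - t) * x) ^ 2 ≤ 0 :=
  div_nonpos_of_nonpos_of_nonneg
    (mul_nonpos_of_nonneg_of_nonpos (mul_pos hx (hx.trans_le hxy)).le (by linarith)) (sq_nonneg _)

lemma harmonicInterp_deriv_mul_div_sq (f : ℝ → ℝ) (hx : 0 < x) (hy : 0 < y)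
    (ht : t ∈ Set.Icc (0 : ℝ) 1) :
    x * y * (x - y) / (t * y + (1 - t) * x) ^ 2 *
        (f (harmonicInterp x y t) / harmonicInterp x y t ^ 2) =
      (x - y) / (x * y) * f (harmonicInterp x y t) := by
  have hd := (harmonicInterp_denom_pos hx hy ht).ne'
  generalize f (harmonicInterp x y t) = F
  unfold harmonicInterp
  generalize t * y + (1 - t) * x = d at hd ⊢
  field_simp

lemma integral_div_sq_eq_integral_comp_harmonicInterp (f : ℝ → ℝ) (hx : 0 < x) (hxy : x ≤ y) :
    ∫ u in x..y, f u / u ^ 2 = (y - x) / (x * y) * ∫ t in (0 : ℝ)..1, f (harmonicInterp x y t) := by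
  have hy : 0 < y := hx.trans_le hxy
  have key := integral_deriv_smul_comp_of_deriv_nonpos (g := fun u ↦ f u / u ^ 2)
    (continuousOn_harmonicInterp hx hy) (fun _ ht ↦ hasDerivAt_harmonicInterp_of_mem_Ioo hx hy ht)
    (fun t _ ↦ harmonicInterp_deriv_nonpos hx hxy t)
  rw [harmonicInterp_zero hx.ne', harmonicInterp_one hy.ne'] at key
  rw [integral_symm, ← key, ← intervalIntegral.integral_const_mul, ← intervalIntegral.integral_neg]
  refine integral_congr fun t ht ↦ ?_
  rw [Set.uIcc_of_le zero_le_one] at ht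
  simp only [smul_eq_mul, Function.comp_apply, harmonicInterp_deriv_mul_div_sq f hx hy ht]
  ring

lemma IntervalIntegrable.comp_harmonicInterp {f : ℝ → ℝ} (hf : IntervalIntegrable f volume x y)
    (hx : 0 < x) (hxy : x < y) :
    IntervalIntegrable (fun t ↦ f (harmonicInterp x y t)) volume 0 1 := by
  have hy : 0 < y := hx.trans hxy
  have hg : IntervalIntegrable (fun u ↦ f u / u ^ 2) volume (harmonicInterp x y 0)
      (harmonicInterp x y 1) := by
    rw [harmonicInterp_zero hx.ne', harmonicInterp_one hy.ne']
    refine (hf.mul_continuousOn (ContinuousOn.inv₀ (by fun_prop) fun u hu ↦ ?_)).symm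
    have : 0 < u := by
      rw [Set.uIcc_of_le hxy.le] at hu
      exact hx.trans_le hu.1
    positivity
  have hsubst := ((integrable_deriv_smul_comp_iff_of_deriv_nonpos
    (continuousOn_harmonicInterp hx hy) (fun _ ht ↦ hasDerivAt_harmonicInterp_of_mem_Ioo hx hy ht)
    (fun t _ ↦ harmonicInterp_deriv_nonpos hx hxy.le t)).2 hg).const_mul (x * y / (x - y))
  refine hsubst.congr_uIoo fun t ht ↦ ?_
  have ht : t ∈ Set.Icc (0 : ℝ) 1 := by
    rw [Set.uIoo_of_le zero_le_one] at ht
    exact Set.Ioo_subset_Icc_self ht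
  have hne : x - y ≠ 0 := sub_ne_zero.2 hxy.ne
  simp only [smul_eq_mul, Function.comp_apply, harmonicInterp_deriv_mul_div_sq f hx hy ht]
  field_simp

lemma IntervalIntegrable.comp_harmonicInterp_symm {f : ℝ → ℝ}
    (hf : IntervalIntegrable (fun t ↦ f (harmonicInterp x y t)) volume 0 1) :
    IntervalIntegrable (fun t ↦ f (harmonicInterp y x t)) volume 0 1 := by
  simpa [harmonicInterp_symm] using (hf.comp_sub_left 1).symm

lemma integral_comp_harmonicInterp_symm (f : ℝ → ℝ) :
    ∫ t in (0 : ℝ)..1, f (harmonicInterp y x t) = ∫ t in (0 : ℝ)..1, f (harmonicInterp x y t) := by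
  simp_rw [← harmonicInterp_symm x y]
  simp [integral_comp_sub_left fun s ↦ f (harmonicInterp y x s)]

lemma integral_rpow_mul_add_one_sub_rpow_mul {α : ℝ} (hα : -1 < α) (p q : ℝ) :
    ∫ t in (0 : ℝ)..1, (t ^ α * p + (1 - t ^ α) * q) = (p + α * q) / (α + 1) := by
  have hr : IntervalIntegrable (fun t : ℝ ↦ t ^ α) volume 0 1 := intervalIntegrable_rpow' hα
  rw [integral_add (hr.mul_const p) ((intervalIntegrable_const.sub hr).mul_const q),
    intervalIntegral.integral_mul_const, intervalIntegral.integral_mul_const,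
    integral_sub intervalIntegrable_const hr, intervalIntegral.integral_const,
    integral_rpow (Or.inl hα), Real.one_rpow, Real.zero_rpow (by linarith)]
  have : α + 1 ≠ 0 := by linarith
  field_simp
  ring

lemma integral_comp_harmonicInterp_le {f : ℝ → ℝ} {α : ℝ} (hα : -1 < α)
    (hconv : ∀ t ∈ Set.Icc (0 : ℝ) 1,
      f (harmonicInterp x y t) ≤ t ^ α * f x + (1 - t ^ α) * f y)
    (hf : IntervalIntegrable (fun t ↦ f (harmonicInterp x y t)) volume 0 1) :
    ∫ t in (0 : ℝ)..1, f (harmonicInterp x y t) ≤ (f x + α * f y) / (α + 1) := by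
  have hr : IntervalIntegrable (fun t : ℝ ↦ t ^ α) volume 0 1 := intervalIntegrable_rpow' hα
  rw [← integral_rpow_mul_add_one_sub_rpow_mul hα]
  exact integral_mono_on zero_le_one hf
    ((hr.mul_const _).add ((intervalIntegrable_const.sub hr).mul_const _)) hconv

end

theorem hermite_hadamard_right_harmonically_alpha_one_convex
    (f : ℝ → ℝ) (α a b : ℝ) (hα : α ∈ Set.Icc (0:ℝ) 1)
    (ha : 0 < a) (hab : a < b)
    (hconv : ∀ x : ℝ, 0 < x → ∀ y : ℝ, 0 < y → ∀ t ∈ Set.Icc (0:ℝ) 1,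
      f (x * y / (t * y + (1 - t) * x)) ≤ t ^ α * f x + (1 - t ^ α) * f y)
    (hint : IntervalIntegrable f volume a b) :
    (a * b / (b - a)) * ∫ x in a..b, f x / x ^ 2 ≤
      min ((f a + α * f b) / (α + 1)) ((f b + α * f a) / (α + 1)) := by
  have hb : 0 < b := ha.trans hab
  have hα' : -1 < α := by linarith [hα.1]
  have hI := hint.comp_harmonicInterp ha hab
  have hscale : a * b / (b - a) * ((b - a) / (a * b)) = 1 := by
    have := (sub_pos.2 hab).ne'
    field_simp
  rw [integral_div_sq_eq_integral_comp_harmonicInterp f ha hab.le, ← mul_assoc, hscale, one_mul]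
  refine le_min (integral_comp_harmonicInterp_le hα' (hconv a ha b hb) hI) ?_
  rw [← integral_comp_harmonicInterp_symm]
  exact integral_comp_harmonicInterp_le hα' (hconv b hb a ha) hI.comp_harmonicInterp_symm
end
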